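/- Let M be a positive integer and let D ⊆ {0,1,...,M-1} be a set of indices that is a complete cover, i.e., for every k ∈ {0,...,M-1} there exist i, i' ∈ D with i ≥ i' and i - i' = k. Let B be the |D| × M selection matrix whose rows are the standard basis vectors indexed by the elements of D. Then the map S ↦ B S Bᴴ, restricted to M × M Hermitian Toeplitz matrices, is injective. -/
import Mathlib


open Matrix

/-- A matrix is Toeplitz on its lower triangle: entries depend only on `i - j` for `i ≥ j`. -/
def IsToeplitzLower {M : ℕ} (S : Matrix (Fin M) (Fin M) ℂ) : Prop :=
  ∀ i j i' j' : Fin M, (j : ℕ) ≤ i → (j' : ℕ) ≤ i' →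
    (i : ℕ) - (j : ℕ) = (i' : ℕ) - (j' : ℕ) → S i j = S i' j'

theorem subsampling_injective_on_hermitian_toeplitz
    (M : ℕ) (hM : 0 < M) (D : Finset (Fin M))
    (hcover : ∀ k : Fin M, ∃ i ∈ D, ∃ i' ∈ D, (i' : ℕ) ≤ i ∧ (i : ℕ) - (i' : ℕ) = k)
    (S₁ S₂ : Matrix (Fin M) (Fin M) ℂ)
    (h₁ : S₁.IsHermitian) (h₂ : S₂.IsHermitian)
    (ht₁ : IsToeplitzLower S₁) (ht₂ : IsToeplitzLower S₂)
    (hsub : (fun (a b : {x // x ∈ D}) => S₁ a.val b.val) = (fun (a b : {x // x ∈ D}) => S₂ a.val b.val)) :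
    S₁ = S₂ := by
  have key : ∀ i j : Fin M, (j : ℕ) ≤ i → S₁ i j = S₂ i j := by
    intro i j hji
    have hk : (i : ℕ) - (j : ℕ) < M := lt_of_le_of_lt (Nat.sub_le _ _) i.isLt
    obtain ⟨a, ha, b, hb, hba, hab⟩ := hcover ⟨(i : ℕ) - (j : ℕ), hk⟩
    have e1 : S₁ i j = S₁ a b := ht₁ i j a b hji hba (by simp [hab])
    have e2 : S₂ i j = S₂ a b := ht₂ i j a b hji hba (by simp [hab])
    have e3 : S₁ a b = S₂ a b :=
      congrFun (congrFun hsub ⟨a, ha⟩) ⟨b, hb⟩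
    rw [e1, e3, ← e2]
  ext i j
  rcases le_or_gt (j : ℕ) (i : ℕ) with h | h
  · exact key i j h
  · have := key j i h.le
    have := congrArg star this
    rw [← h₁.apply, ← h₂.apply] at this
    simpa using this
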